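/- arXiv:1807.05880 — 2 statements merged into one kernel-verified Lean document; each statement's English description precedes it below -/
import Mathlib

section
/- Let $X$ be a reflexive real Banach space and $A : X \to X^*$ a maximal monotone, everywhere-defined, demicontinuous map. Then $A$ is pseudomonotone: if $u_n \rightharpoonup u$ weakly in $X$, $A(u_n) \rightharpoonup u^*$ weakly in $X^*$ and $\limsup_n \langle A(u_n), u_n - u\rangle \le 0$, then for every $y \in X$, $\langle A(u), u - y\rangle \le \liminf_n \langle A(u_n), u_n - y\rangle$. -/
/-!
Both sequences are bounded (uniform boundedness), so `f n := ⟨A uₙ, uₙ - u⟩` is bounded.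
Monotonicity gives `f n ≥ ⟨A u, uₙ - u⟩ → 0`, hence `f n → 0`. Passing to the limit in
`⟨A uₙ - A v, uₙ - v⟩ ≥ 0` then shows `⟨u* - A v, u - v⟩ ≥ 0` for all `v`, so `u* = A u` by
maximality (Minty's trick), and `⟨A uₙ, uₙ - y⟩ = f n + ⟨A uₙ, u - y⟩ → ⟨A u, u - y⟩`.
-/

open Filter

section Boundedness

variable {E F : Type*} [NormedAddCommGroup E] [NormedSpace ℝ E]

theorem exists_norm_le_of_forall_tendsto_apply [CompleteSpace E] [NormedAddCommGroup F]
    [NormedSpace ℝ F] {φ : ℕ → E →L[ℝ] F} {ψ : E → F}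
    (h : ∀ x, Tendsto (fun n => φ n x) atTop (nhds (ψ x))) : ∃ C, ∀ n, ‖φ n‖ ≤ C :=
  banach_steinhaus fun x => by
    obtain ⟨C, hC⟩ := (h x).norm.bddAbove_range
    exact ⟨C, fun n => hC ⟨n, rfl⟩⟩

theorem exists_norm_le_of_weak_tendsto {x : ℕ → E} {x₀ : E}
    (h : ∀ f : E →L[ℝ] ℝ, Tendsto (fun n => f (x n)) atTop (nhds (f x₀))) :
    ∃ C, ∀ n, ‖x n‖ ≤ C := by
  obtain ⟨C, hC⟩ := exists_norm_le_of_forall_tendsto_apply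
    (φ := fun n => NormedSpace.inclusionInDoubleDual ℝ E (x n)) h
  exact ⟨C, fun n => (NormedSpace.inclusionInDoubleDualLi ℝ (E := E)).norm_map (x n) ▸ hC n⟩

theorem isBoundedUnder_abs_apply_of_tendsto [CompleteSpace E] {φ : ℕ → E →L[ℝ] ℝ}
    {ψ : E → ℝ} {x : ℕ → E} {x₀ : E}
    (hφ : ∀ y, Tendsto (fun n => φ n y) atTop (nhds (ψ y)))
    (hx : ∀ f : E →L[ℝ] ℝ, Tendsto (fun n => f (x n)) atTop (nhds (f x₀))) :
    IsBoundedUnder (· ≤ ·) atTop fun n => |φ n (x n)| := by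
  obtain ⟨C, hC⟩ := exists_norm_le_of_forall_tendsto_apply hφ
  obtain ⟨D, hD⟩ := exists_norm_le_of_weak_tendsto hx
  refine isBoundedUnder_of ⟨C * D, fun n => ?_⟩
  calc |φ n (x n)| ≤ ‖φ n‖ * ‖x n‖ := (φ n).le_opNorm _
    _ ≤ C * D := mul_le_mul (hC n) (hD n) (norm_nonneg _) ((norm_nonneg _).trans (hC n))

theorem tendsto_apply_sub_of_tendsto_apply_sub_zero {φ : ℕ → E →L[ℝ] ℝ} {ψ : E → ℝ}
    {x : ℕ → E} {x₀ : E} (hφ : ∀ y, Tendsto (fun n => φ n y) atTop (nhds (ψ y)))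
    (h0 : Tendsto (fun n => φ n (x n - x₀)) atTop (nhds 0)) (y : E) :
    Tendsto (fun n => φ n (x n - y)) atTop (nhds (ψ (x₀ - y))) := by
  have hsplit : ∀ n, φ n (x n - y) = φ n (x n - x₀) + φ n (x₀ - y) := fun n => by
    rw [← map_add, sub_add_sub_cancel]
  simpa only [hsplit, zero_add] using h0.add (hφ (x₀ - y))

end Boundedness

section MonotoneOperator

variable {X : Type*} [NormedAddCommGroup X] [NormedSpace ℝ X]

theorem tendsto_apply_sub_zero_of_limsup_nonpos {A : X → X →L[ℝ] ℝ}
    (hmono : ∀ u v : X, 0 ≤ (A u - A v) (u - v)) {u : ℕ → X} {u₀ : X}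
    (huw : ∀ f : X →L[ℝ] ℝ, Tendsto (fun n => f (u n)) atTop (nhds (f u₀)))
    (hbdd : IsBoundedUnder (· ≤ ·) atTop fun n => |A (u n) (u n - u₀)|)
    (hlimsup : limsup (fun n => A (u n) (u n - u₀)) atTop ≤ 0) :
    Tendsto (fun n => A (u n) (u n - u₀)) atTop (nhds 0) := by
  obtain ⟨hbdd_le, hbdd_ge⟩ := isBoundedUnder_le_abs.1 hbdd
  have hlower : Tendsto (fun n => A u₀ (u n - u₀)) atTop (nhds 0) := by
    simpa only [map_sub, sub_self] using (huw (A u₀)).sub_const (A u₀ u₀)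
  have hle : ∀ n, A u₀ (u n - u₀) ≤ A (u n) (u n - u₀) := fun n => by
    simpa only [sub_apply, sub_nonneg] using hmono (u n) u₀
  have hliminf : 0 ≤ liminf (fun n => A (u n) (u n - u₀)) atTop := by
    rw [← hlower.liminf_eq]
    exact liminf_le_liminf (Eventually.of_forall hle) hlower.isBoundedUnder_ge
      hbdd_le.isCoboundedUnder_ge
  exact tendsto_of_le_liminf_of_limsup_le hliminf hlimsup hbdd_le hbdd_ge

theorem monotone_gap_nonneg_of_tendsto {A : X → X →L[ℝ] ℝ}
    (hmono : ∀ u v : X, 0 ≤ (A u - A v) (u - v)) {u : ℕ → X} {u₀ : X}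
    (huw : ∀ f : X →L[ℝ] ℝ, Tendsto (fun n => f (u n)) atTop (nhds (f u₀)))
    {ustar : X →L[ℝ] ℝ} (hAw : ∀ y : X, Tendsto (fun n => A (u n) y) atTop (nhds (ustar y)))
    (h0 : Tendsto (fun n => A (u n) (u n - u₀)) atTop (nhds 0)) (v : X) :
    0 ≤ (ustar - A v) (u₀ - v) := by
  have hAv : Tendsto (fun n => A v (u n - v)) atTop (nhds (A v (u₀ - v))) := by
    simpa only [map_sub] using (huw (A v)).sub_const (A v v)
  have hlim := (tendsto_apply_sub_of_tendsto_apply_sub_zero hAw h0 v).sub hAv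
  simpa only [sub_apply] using
    ge_of_tendsto' hlim fun n => by simpa only [sub_apply] using hmono (u n) v

end MonotoneOperator

theorem maximal_monotone_demicontinuous_is_pseudomonotone_general
    {X : Type*} [NormedAddCommGroup X] [NormedSpace ℝ X] [CompleteSpace X]
    (A : X → (X →L[ℝ] ℝ))
    (hmono : ∀ u v : X, 0 ≤ (A u - A v) (u - v))
    (hmax : ∀ (u : X) (w : X →L[ℝ] ℝ), (∀ v : X, 0 ≤ (w - A v) (u - v)) → w = A u)
    (u : ℕ → X) (u₀ : X)
    (huw : ∀ f : X →L[ℝ] ℝ, Tendsto (fun n => f (u n)) atTop (nhds (f u₀)))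
    (ustar : X →L[ℝ] ℝ)
    (hAw : ∀ y : X, Tendsto (fun n => A (u n) y) atTop (nhds (ustar y)))
    (hlimsup : Filter.limsup (fun n => A (u n) (u n - u₀)) atTop ≤ 0) :
    ∀ y : X, A u₀ (u₀ - y) ≤ Filter.liminf (fun n => A (u n) (u n - y)) atTop := by
  have h0 := tendsto_apply_sub_zero_of_limsup_nonpos hmono huw
    (isBoundedUnder_abs_apply_of_tendsto (x₀ := 0) hAw fun f => by
      simpa only [map_sub, sub_self, map_zero] using (huw f).sub_const (f u₀)) hlimsup
  have hustar : ustar = A u₀ := hmax u₀ ustar (monotone_gap_nonneg_of_tendsto hmono huw hAw h0)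
  intro y
  rw [(tendsto_apply_sub_of_tendsto_apply_sub_zero hAw h0 y).liminf_eq, hustar]

theorem maximal_monotone_demicontinuous_is_pseudomonotone
    {X : Type*} [NormedAddCommGroup X] [NormedSpace ℝ X] [CompleteSpace X]
    (hrefl : Function.Surjective (NormedSpace.inclusionInDoubleDual ℝ X))
    (A : X → (X →L[ℝ] ℝ))
    (hmono : ∀ u v : X, 0 ≤ (A u - A v) (u - v))
    (hmax : ∀ (u : X) (w : X →L[ℝ] ℝ), (∀ v : X, 0 ≤ (w - A v) (u - v)) → w = A u)
    (hdemi : ∀ (f : ℕ → X) (x : X), Tendsto f atTop (nhds x) →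
      ∀ y : X, Tendsto (fun n => A (f n) y) atTop (nhds (A x y)))
    (u : ℕ → X) (u₀ : X)
    (huw : ∀ f : X →L[ℝ] ℝ, Tendsto (fun n => f (u n)) atTop (nhds (f u₀)))
    (ustar : X →L[ℝ] ℝ)
    (hAw : ∀ y : X, Tendsto (fun n => A (u n) y) atTop (nhds (ustar y)))
    (hlimsup : Filter.limsup (fun n => A (u n) (u n - u₀)) atTop ≤ 0) :
    ∀ y : X, A u₀ (u₀ - y) ≤ Filter.liminf (fun n => A (u n) (u n - y)) atTop :=
  maximal_monotone_demicontinuous_is_pseudomonotone_general A hmono hmax u u₀ huw ustar hAw hlimsup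
end

section
/- Let $\Omega \subseteq \mathbb{R}^N$ be a bounded domain and $a : \mathbb{R} \to \mathbb{R}$ satisfy $|a(x) - a(y)| \le k|x-y|$ and $0 < c_1 \le a(x) \le c_2$ for all $x, y \in \mathbb{R}$. Define $\hat{a} : H^1(\Omega) \to H^1(\Omega)^*$ by $\langle \hat{a}(u), h\rangle = \int_\Omega a(u) (Du, Dh)_{\mathbb{R}^N}\, dz$. If $u_n \rightharpoonup u$ weakly in $H^1(\Omega)$ (hence $u_n \to u$ in $L^2(\Omega)$) and $\limsup_n \langle \hat{a}(u_n), u_n - u\rangle \le 0$, then $u_n \to u$ strongly in $H^1(\Omega)$. -/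
open Filter MeasureTheory Topology
open scoped RealInnerProductSpace

/-!
Write `f n = Du n - Du₀`. Pointwise `a (u n) ⟪Du n, f n⟫ = a (u n) ‖f n‖² + ⟪a (u n) • Du₀, f n⟫`,
and the first term dominates `c₁ ‖f n‖²`. In the second, `a (u n) • Du₀ → a (u₀) • Du₀` strongly
in `L²` (dominated convergence along a.e. convergent subsequences, as `u n → u₀` in measure), while
`f n ⇀ 0` weakly and is bounded by Banach–Steinhaus; so it tends to `0`, and
`limsup c₁ ‖f n‖₂² ≤ limsup ⟨â (u n), u n - u₀⟩ ≤ 0`.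
-/

namespace MeasureTheory.MemLp

variable {α E : Type*} [MeasurableSpace α] {μ : Measure α}
  [NormedAddCommGroup E] [InnerProductSpace ℝ E] {f g : α → E}

theorem inner_toLp (hf : MemLp f 2 μ) (hg : MemLp g 2 μ) :
    ⟪hf.toLp f, hg.toLp g⟫ = ∫ x, ⟪f x, g x⟫ ∂μ := by
  rw [L2.inner_def]
  refine integral_congr_ae ?_
  filter_upwards [hf.coeFn_toLp, hg.coeFn_toLp] with x hfx hgx
  rw [hfx, hgx]

theorem integrable_inner (hf : MemLp f 2 μ) (hg : MemLp g 2 μ) :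
    Integrable (fun x => ⟪f x, g x⟫) μ := by
  refine (L2.integrable_inner (hf.toLp f) (hg.toLp g)).congr ?_
  filter_upwards [hf.coeFn_toLp, hg.coeFn_toLp] with x hfx hgx
  rw [hfx, hgx]

theorem norm_toLp_sq (hf : MemLp f 2 μ) : ‖hf.toLp f‖ ^ 2 = ∫ x, ‖f x‖ ^ 2 ∂μ := by
  simp_rw [← real_inner_self_eq_norm_sq]
  exact hf.inner_toLp hf

theorem abs_integral_inner_le (hf : MemLp f 2 μ) (hg : MemLp g 2 μ) :
    |∫ x, ⟪f x, g x⟫ ∂μ| ≤ √(∫ x, ‖f x‖ ^ 2 ∂μ) * √(∫ x, ‖g x‖ ^ 2 ∂μ) := by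
  rw [← hf.inner_toLp hg, ← hf.norm_toLp_sq, ← hg.norm_toLp_sq, Real.sqrt_sq (norm_nonneg _),
    Real.sqrt_sq (norm_nonneg _)]
  exact abs_real_inner_le_norm _ _

theorem smul_of_abs_le {φ : α → ℝ} (hφ : AEStronglyMeasurable φ μ) {M : ℝ}
    (hφM : ∀ x, |φ x| ≤ M) (hf : MemLp f 2 μ) : MemLp (fun x => φ x • f x) 2 μ :=
  hf.smul (memLp_top_of_bound hφ M (ae_of_all _ hφM))

end MeasureTheory.MemLp

namespace MeasureTheory

variable {α E : Type*} [MeasurableSpace α] {μ : Measure α}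
  [NormedAddCommGroup E] [InnerProductSpace ℝ E]

section WeightedIntegral

variable {φ : α → ℝ} {M : ℝ} {f g h : α → E}

theorem integrable_mul_norm_sq (hφ : AEStronglyMeasurable φ μ) (hφM : ∀ x, |φ x| ≤ M)
    (hf : MemLp f 2 μ) : Integrable (fun x => φ x * ‖f x‖ ^ 2) μ := by
  refine ((hf.smul_of_abs_le hφ hφM).integrable_inner hf).congr (ae_of_all _ fun x => ?_)
  simp only [real_inner_smul_left, real_inner_self_eq_norm_sq]

theorem integral_mul_inner_sub (hφ : AEStronglyMeasurable φ μ) (hφM : ∀ x, |φ x| ≤ M)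
    (hg : MemLp g 2 μ) (hh : MemLp h 2 μ) :
    ∫ x, φ x * ⟪g x, g x - h x⟫ ∂μ
      = ∫ x, φ x * ‖g x - h x‖ ^ 2 ∂μ + ∫ x, ⟪φ x • h x, g x - h x⟫ ∂μ := by
  have hgh : MemLp (fun x => g x - h x) 2 μ := hg.sub hh
  rw [← integral_add (integrable_mul_norm_sq hφ hφM hgh)
    ((hh.smul_of_abs_le hφ hφM).integrable_inner hgh)]
  refine integral_congr_ae (ae_of_all _ fun x => ?_)
  simp only [real_inner_smul_left, ← real_inner_self_eq_norm_sq, inner_sub_left, inner_sub_right]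
  ring

theorem mul_integral_norm_sq_le (hφ : AEStronglyMeasurable φ μ) (hφM : ∀ x, |φ x| ≤ M)
    {c : ℝ} (hcφ : ∀ x, c ≤ φ x) (hf : MemLp f 2 μ) :
    c * ∫ x, ‖f x‖ ^ 2 ∂μ ≤ ∫ x, φ x * ‖f x‖ ^ 2 ∂μ := by
  rw [← integral_const_mul]
  exact integral_mono (hf.integrable_norm_pow two_ne_zero |>.const_mul c)
    (integrable_mul_norm_sq hφ hφM hf) fun x => by gcongr; exact hcφ x

theorem integral_mul_norm_sq_le (hφ : AEStronglyMeasurable φ μ) (hφM : ∀ x, |φ x| ≤ M)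
    (hf : MemLp f 2 μ) : ∫ x, φ x * ‖f x‖ ^ 2 ∂μ ≤ M * ∫ x, ‖f x‖ ^ 2 ∂μ := by
  rw [← integral_const_mul]
  exact integral_mono (integrable_mul_norm_sq hφ hφM hf)
    (hf.integrable_norm_pow two_ne_zero |>.const_mul M) fun x => by
      gcongr; exact (le_abs_self _).trans (hφM x)

end WeightedIntegral
def IsWeaklyNullL2 (μ : Measure α) (f : ℕ → α → E) : Prop :=
  ∀ w : α → E, MemLp w 2 μ → Tendsto (fun n => ∫ x, ⟪f n x, w x⟫ ∂μ) atTop (𝓝 0)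

theorem isWeaklyNullL2_sub {f : ℕ → α → E} {f₀ : α → E} (hf : ∀ n, MemLp (f n) 2 μ)
    (hf₀ : MemLp f₀ 2 μ)
    (h : ∀ w : α → E, MemLp w 2 μ →
      Tendsto (fun n => ∫ x, ⟪f n x, w x⟫ ∂μ) atTop (𝓝 (∫ x, ⟪f₀ x, w x⟫ ∂μ))) :
    IsWeaklyNullL2 μ fun n x => f n x - f₀ x := by
  intro w hw
  have hsub : ∀ n, ∫ x, ⟪f n x - f₀ x, w x⟫ ∂μ
      = ∫ x, ⟪f n x, w x⟫ ∂μ - ∫ x, ⟪f₀ x, w x⟫ ∂μ := fun n => by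
    simp only [inner_sub_left]
    exact integral_sub ((hf n).integrable_inner hw) (hf₀.integrable_inner hw)
  simpa only [hsub, sub_self] using (h w hw).sub_const (∫ x, ⟪f₀ x, w x⟫ ∂μ)

namespace IsWeaklyNullL2

variable [CompleteSpace E] {f : ℕ → α → E}

theorem exists_integral_norm_sq_le (hf : ∀ n, MemLp (f n) 2 μ) (hfw : IsWeaklyNullL2 μ f) :
    ∃ C, ∀ n, ∫ x, ‖f n x‖ ^ 2 ∂μ ≤ C := by
  obtain ⟨C, hC⟩ := banach_steinhaus (g := fun n => innerSL ℝ ((hf n).toLp (f n))) fun w => by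
    have hinner : ∀ n, ⟪(hf n).toLp (f n), w⟫ = ∫ x, ⟪f n x, w x⟫ ∂μ := fun n => by
      simpa only [Lp.toLp_coeFn] using (hf n).inner_toLp (Lp.memLp w)
    obtain ⟨B, hB⟩ := (hfw w (Lp.memLp w)).norm.bddAbove_range
    exact ⟨B, fun n => by simpa [hinner] using hB (Set.mem_range_self n)⟩
  refine ⟨C ^ 2, fun n => ?_⟩
  have hCn : ‖(hf n).toLp (f n)‖ ≤ C := by simpa only [innerSL_apply_norm] using hC n
  rw [← (hf n).norm_toLp_sq]
  gcongr

theorem tendsto_integral_inner (hf : ∀ n, MemLp (f n) 2 μ) (hfw : IsWeaklyNullL2 μ f)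
    {g : ℕ → α → E} {g₀ : α → E} (hg : ∀ n, MemLp (g n) 2 μ) (hg₀ : MemLp g₀ 2 μ)
    (hgg : Tendsto (fun n => ∫ x, ‖g n x - g₀ x‖ ^ 2 ∂μ) atTop (𝓝 0)) :
    Tendsto (fun n => ∫ x, ⟪g n x, f n x⟫ ∂μ) atTop (𝓝 0) := by
  obtain ⟨C, hC⟩ := hfw.exists_integral_norm_sq_le hf
  have hgsub : ∀ n, MemLp (fun x => g n x - g₀ x) 2 μ := fun n => (hg n).sub hg₀
  have hsplit : ∀ n, ∫ x, ⟪g n x, f n x⟫ ∂μ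
      = ∫ x, ⟪g n x - g₀ x, f n x⟫ ∂μ + ∫ x, ⟪f n x, g₀ x⟫ ∂μ := fun n => by
    rw [← integral_add ((hgsub n).integrable_inner (hf n)) ((hf n).integrable_inner hg₀)]
    refine integral_congr_ae (ae_of_all _ fun x => ?_)
    simp only
    rw [← real_inner_comm (f n x) (g₀ x), ← inner_add_left, sub_add_cancel]
  have hstrong : Tendsto (fun n => ∫ x, ⟪g n x - g₀ x, f n x⟫ ∂μ) atTop (𝓝 0) := by
    refine squeeze_zero_norm (fun n => ?_) (by simpa using hgg.sqrt.mul_const √C)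
    rw [Real.norm_eq_abs]
    exact (((hgsub n)).abs_integral_inner_le (hf n)).trans (by gcongr; exact hC n)
  simpa only [hsplit, add_zero] using hstrong.add (hfw g₀ hg₀)

end IsWeaklyNullL2

theorem tendstoInMeasure_of_tendsto_integral_norm_sub_sq {F : Type*} [NormedAddCommGroup F]
    {f : ℕ → α → F} {f₀ : α → F} (hf : ∀ n, MemLp (f n) 2 μ) (hf₀ : MemLp f₀ 2 μ)
    (h : Tendsto (fun n => ∫ x, ‖f n x - f₀ x‖ ^ 2 ∂μ) atTop (𝓝 0)) :
    TendstoInMeasure μ f atTop f₀ := by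
  refine tendstoInMeasure_of_tendsto_eLpNorm two_ne_zero (fun n => (hf n).1) hf₀.1 ?_
  have hnorm : ∀ n, eLpNorm (f n - f₀) 2 μ = ENNReal.ofReal √(∫ x, ‖f n x - f₀ x‖ ^ 2 ∂μ) :=
    fun n => by
      rw [((hf n).sub hf₀).eLpNorm_eq_integral_rpow_norm two_ne_zero ENNReal.ofNat_ne_top,
        Real.sqrt_eq_rpow]
      simp
  simpa only [hnorm, Real.sqrt_zero, ENNReal.ofReal_zero] using
    (ENNReal.tendsto_ofReal h.sqrt)

theorem TendstoInMeasure.tendsto_integral_norm_comp_smul_sub_sq {β : Type*}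
    [PseudoEMetricSpace β] {u : ℕ → α → β} {u₀ : α → β} (hu : TendstoInMeasure μ u atTop u₀)
    (hum : ∀ n, AEStronglyMeasurable (u n) μ) (hu₀ : AEStronglyMeasurable u₀ μ)
    {φ : β → ℝ} (hφ : Continuous φ) {M : ℝ} (hφM : ∀ s, |φ s| ≤ M)
    {g : α → E} (hg : MemLp g 2 μ) :
    Tendsto (fun n => ∫ x, ‖φ (u n x) • g x - φ (u₀ x) • g x‖ ^ 2 ∂μ) atTop (𝓝 0) := by
  refine tendsto_of_subseq_tendsto fun ns hns => ?_
  obtain ⟨ms, -, hae⟩ := (hu.comp hns).exists_seq_tendsto_ae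
  refine ⟨ms, ?_⟩
  have hbound : ∀ n x, ‖φ (u n x) • g x - φ (u₀ x) • g x‖ ^ 2 ≤ (2 * M) ^ 2 * ‖g x‖ ^ 2 := by
    intro n x
    rw [← sub_smul, norm_smul, mul_pow, Real.norm_eq_abs]
    gcongr
    linarith [abs_sub (φ (u n x)) (φ (u₀ x)), hφM (u n x), hφM (u₀ x)]
  have hmeas : ∀ n, AEStronglyMeasurable
      (fun x => ‖φ (u n x) • g x - φ (u₀ x) • g x‖ ^ 2) μ := fun n =>
    (((hφ.comp_aestronglyMeasurable (hum n)).smul hg.1).sub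
      ((hφ.comp_aestronglyMeasurable hu₀).smul hg.1)).norm.pow 2
  have hlim : ∀ᵐ x ∂μ, Tendsto (fun i => ‖φ (u (ns (ms i)) x) • g x - φ (u₀ x) • g x‖ ^ 2)
      atTop (𝓝 0) := by
    filter_upwards [hae] with x hx
    simpa using ((((hφ.tendsto _).comp hx).smul_const (g x)).sub_const
      (φ (u₀ x) • g x)).norm.pow 2
  simpa using tendsto_integral_of_dominated_convergence _ (fun i => hmeas (ns (ms i)))
    ((hg.integrable_norm_pow two_ne_zero).const_mul ((2 * M) ^ 2))
    (fun i => ae_of_all _ fun x => by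
      rw [Real.norm_of_nonneg (by positivity)]; exact hbound _ x) hlim

end MeasureTheory

-- The bound `K` matters: in `ℝ`, the `limsup` of a sequence unbounded above is the junk value `0`.
theorem tendsto_zero_of_limsup_add_nonpos {ι : Type*} {l : Filter ι} {x e : ι → ℝ} {K : ℝ}
    (hx : ∀ i, 0 ≤ x i ∧ x i ≤ K) (he : Tendsto e l (𝓝 0))
    (h : limsup (fun i => x i + e i) l ≤ 0) : Tendsto x l (𝓝 0) := by
  obtain ⟨B, hB⟩ := he.isBoundedUnder_le
  have hbdd : IsBoundedUnder (· ≤ ·) l fun i => x i + e i :=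
    isBoundedUnder_of_eventually_le (a := K + B)
      ((eventually_map.1 hB).mono fun i hi => add_le_add (hx i).2 hi)
  refine tendsto_order.2 ⟨fun b hb => Eventually.of_forall fun i => hb.trans_le (hx i).1,
    fun b hb => ?_⟩
  filter_upwards [eventually_lt_of_limsup_lt (h.trans_lt (half_pos hb)) hbdd,
    he.eventually (lt_mem_nhds (neg_lt_zero.2 (half_pos hb)))] with i hxe he
  linarith

theorem gradient_strong_convergence_from_limsup_condition_general
    {N : ℕ}
    (μ : Measure (EuclideanSpace ℝ (Fin N)))
    (a : ℝ → ℝ) (k c₁ c₂ : ℝ) (hc₁ : 0 < c₁)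
    (halip : ∀ x y : ℝ, |a x - a y| ≤ k * |x - y|)
    (habd : ∀ x : ℝ, c₁ ≤ a x ∧ a x ≤ c₂)
    (u : ℕ → EuclideanSpace ℝ (Fin N) → ℝ) (u₀ : EuclideanSpace ℝ (Fin N) → ℝ)
    (Du : ℕ → EuclideanSpace ℝ (Fin N) → EuclideanSpace ℝ (Fin N))
    (Du₀ : EuclideanSpace ℝ (Fin N) → EuclideanSpace ℝ (Fin N))
    (hu2 : ∀ n, MemLp (u n) 2 μ) (hu02 : MemLp u₀ 2 μ)
    (hDu2 : ∀ n, MemLp (Du n) 2 μ) (hDu02 : MemLp Du₀ 2 μ)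
    -- weak convergence u_n ⇀ u₀ in H¹(Ω):
    (hDuweak : ∀ w : EuclideanSpace ℝ (Fin N) → EuclideanSpace ℝ (Fin N), MemLp w 2 μ →
      Tendsto (fun n => ∫ x, (inner ℝ (Du n x) (w x) : ℝ) ∂μ) atTop
        (nhds (∫ x, (inner ℝ (Du₀ x) (w x) : ℝ) ∂μ)))
    -- hence u_n → u₀ strongly in L²(Ω):
    (hustrong : Tendsto (fun n => ∫ x, |u n x - u₀ x| ^ 2 ∂μ) atTop (nhds 0))
    -- limsup ⟨â(u_n), u_n - u₀⟩ ≤ 0: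
    (hlimsup : Filter.limsup
      (fun n => ∫ x, a (u n x) * (inner ℝ (Du n x) (Du n x - Du₀ x) : ℝ) ∂μ) atTop ≤ 0) :
    Tendsto (fun n => ∫ x, ‖Du n x - Du₀ x‖ ^ 2 ∂μ) atTop (nhds 0) ∧
    Tendsto (fun n => ∫ x, |u n x - u₀ x| ^ 2 ∂μ) atTop (nhds 0) := by
  have ha : Continuous a :=
    (LipschitzWith.of_dist_le' fun x y => by simpa only [Real.dist_eq] using halip x y).continuous
  have ha_abs : ∀ s, |a s| ≤ c₂ := fun s =>
    abs_le.2 ⟨by linarith [(habd s).1, (habd s).2], (habd s).2⟩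
  have hau : ∀ n, AEStronglyMeasurable (fun x => a (u n x)) μ := fun n =>
    ha.comp_aestronglyMeasurable (hu2 n).1
  have hf : ∀ n, MemLp (fun x => Du n x - Du₀ x) 2 μ := fun n => (hDu2 n).sub hDu02
  have hfw := isWeaklyNullL2_sub hDu2 hDu02 hDuweak
  obtain ⟨S, hS⟩ := hfw.exists_integral_norm_sq_le hf
  have hu : TendstoInMeasure μ u atTop u₀ := tendstoInMeasure_of_tendsto_integral_norm_sub_sq
    hu2 hu02 (by simpa only [Real.norm_eq_abs] using hustrong)
  have hcross : Tendsto (fun n => ∫ x, ⟪a (u n x) • Du₀ x, Du n x - Du₀ x⟫ ∂μ) atTop (𝓝 0) :=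
    hfw.tendsto_integral_inner hf (fun n => hDu02.smul_of_abs_le (hau n) fun _ => ha_abs _)
      (hDu02.smul_of_abs_le (ha.comp_aestronglyMeasurable hu02.1) fun _ => ha_abs _)
      (hu.tendsto_integral_norm_comp_smul_sub_sq (fun n => (hu2 n).1) hu02.1 ha ha_abs hDu02)
  have hsplit : (fun n => ∫ x, a (u n x) * ⟪Du n x, Du n x - Du₀ x⟫ ∂μ) = fun n =>
      ∫ x, a (u n x) * ‖Du n x - Du₀ x‖ ^ 2 ∂μ + ∫ x, ⟪a (u n x) • Du₀ x, Du n x - Du₀ x⟫ ∂μ :=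
    funext fun n => integral_mul_inner_sub (hau n) (fun _ => ha_abs _) (hDu2 n) hDu02
  rw [hsplit] at hlimsup
  have hc₂ : 0 ≤ c₂ := hc₁.le.trans ((habd 0).1.trans (habd 0).2)
  have hcoercive : ∀ n, c₁ * ∫ x, ‖Du n x - Du₀ x‖ ^ 2 ∂μ
      ≤ ∫ x, a (u n x) * ‖Du n x - Du₀ x‖ ^ 2 ∂μ := fun n =>
    mul_integral_norm_sq_le (hau n) (fun _ => ha_abs _) (fun _ => (habd _).1) (hf n)
  have hweighted := tendsto_zero_of_limsup_add_nonpos (K := c₂ * S) (fun n =>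
    ⟨(mul_nonneg hc₁.le (integral_nonneg fun _ => sq_nonneg _)).trans (hcoercive n),
      (integral_mul_norm_sq_le (hau n) (fun _ => ha_abs _) (hf n)).trans
        (mul_le_mul_of_nonneg_left (hS n) hc₂)⟩) hcross hlimsup
  refine ⟨squeeze_zero (fun n => integral_nonneg fun _ => sq_nonneg _)
    (fun n => (le_div_iff₀' hc₁).2 (hcoercive n)) (by simpa using hweighted.div_const c₁),
    hustrong⟩

theorem gradient_strong_convergence_from_limsup_condition
    {N : ℕ} (Ω : Set (EuclideanSpace ℝ (Fin N)))
    (hΩopen : IsOpen Ω) (hΩbd : Bornology.IsBounded Ω) (hΩne : Ω.Nonempty)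
    (μ : Measure (EuclideanSpace ℝ (Fin N))) (hμ : μ = volume.restrict Ω)
    (a : ℝ → ℝ) (k c₁ c₂ : ℝ) (hk : 0 < k) (hc₁ : 0 < c₁)
    (halip : ∀ x y : ℝ, |a x - a y| ≤ k * |x - y|)
    (habd : ∀ x : ℝ, c₁ ≤ a x ∧ a x ≤ c₂)
    (u : ℕ → EuclideanSpace ℝ (Fin N) → ℝ) (u₀ : EuclideanSpace ℝ (Fin N) → ℝ)
    (Du : ℕ → EuclideanSpace ℝ (Fin N) → EuclideanSpace ℝ (Fin N))
    (Du₀ : EuclideanSpace ℝ (Fin N) → EuclideanSpace ℝ (Fin N))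
    (hu2 : ∀ n, MemLp (u n) 2 μ) (hu02 : MemLp u₀ 2 μ)
    (hDu2 : ∀ n, MemLp (Du n) 2 μ) (hDu02 : MemLp Du₀ 2 μ)
    -- weak convergence u_n ⇀ u₀ in H¹(Ω):
    (huweak : ∀ v : EuclideanSpace ℝ (Fin N) → ℝ, MemLp v 2 μ →
      Tendsto (fun n => ∫ x, u n x * v x ∂μ) atTop (nhds (∫ x, u₀ x * v x ∂μ)))
    (hDuweak : ∀ w : EuclideanSpace ℝ (Fin N) → EuclideanSpace ℝ (Fin N), MemLp w 2 μ →
      Tendsto (fun n => ∫ x, (inner ℝ (Du n x) (w x) : ℝ) ∂μ) atTop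
        (nhds (∫ x, (inner ℝ (Du₀ x) (w x) : ℝ) ∂μ)))
    -- hence u_n → u₀ strongly in L²(Ω):
    (hustrong : Tendsto (fun n => ∫ x, |u n x - u₀ x| ^ 2 ∂μ) atTop (nhds 0))
    -- limsup ⟨â(u_n), u_n - u₀⟩ ≤ 0:
    (hlimsup : Filter.limsup
      (fun n => ∫ x, a (u n x) * (inner ℝ (Du n x) (Du n x - Du₀ x) : ℝ) ∂μ) atTop ≤ 0) :
    Tendsto (fun n => ∫ x, ‖Du n x - Du₀ x‖ ^ 2 ∂μ) atTop (nhds 0) ∧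
    Tendsto (fun n => ∫ x, |u n x - u₀ x| ^ 2 ∂μ) atTop (nhds 0) :=
  gradient_strong_convergence_from_limsup_condition_general μ a k c₁ c₂ hc₁ halip habd u u₀ Du Du₀
    hu2 hu02 hDu2 hDu02 hDuweak hustrong hlimsup
end
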